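/- A graph morphism g from the standard m-cube to the standard n-cube preserves pointwise meets and pointwise joins (g (x ⊓ y) = g x ⊓ g y and g (x ⊔ y) = g x ⊔ g y for all vertices x, y) if and only if g is dimension-preserving. -/

import Mathlib

/-- Edge relation of the standard n-cube. -/
def CubeE (n : ℕ) (x y : Fin n → Bool) : Prop :=
  x = y ∨ ∃ i : Fin n, x i = false ∧ y i = true ∧ ∀ j, j ≠ i → x j = y j

/-- Graph morphisms between directed graphs given by edge relations. -/
def IsGraphHom {V V' : Type*} (E : V → V → Prop) (E' : V' → V' → Prop) (g : V → V') : Prop :=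
  ∀ x y, E x y → E' (g x) (g y)

/-- The pair (x, y) is a non-loop edge flipping exactly coordinate i. -/
def Flips {n : ℕ} (x y : Fin n → Bool) (i : Fin n) : Prop :=
  x i ≠ y i ∧ ∀ j, j ≠ i → x j = y j

/-- A map between cube vertex sets is dimension-preserving. -/
def DimPres {m n : ℕ} (g : (Fin m → Bool) → (Fin n → Bool)) : Prop :=
  ∀ x₁ y₁ x₂ y₂ (i : Fin m), Flips x₁ y₁ i → Flips x₂ y₂ i →
    (g x₁ = g y₁ ∧ g x₂ = g y₂) ∨
    ∃ j : Fin n, Flips (g x₁) (g y₁) j ∧ Flips (g x₂) (g y₂) j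

/-- Preservation of pointwise meets. -/
def PresMeet {m n : ℕ} (g : (Fin m → Bool) → (Fin n → Bool)) : Prop :=
  ∀ x y, g (fun i => x i && y i) = fun i => g x i && g y i

/-- Preservation of pointwise joins. -/
def PresJoin {m n : ℕ} (g : (Fin m → Bool) → (Fin n → Bool)) : Prop :=
  ∀ x y, g (fun i => x i || y i) = fun i => g x i || g y i

/-!
Both conditions say that every coordinate `k` of `g` is a constant or a projection `x ↦ x i`.
For meets and joins this is the classification of lattice homomorphisms `(ι → Bool) → Bool`:
a non-constant one sends `⊥` to `false`, so by induction over the cube it sends some atom `eᵢ`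
to `true`, and then it agrees with `x ↦ x i`. For dimension preservation, a graph morphism sends
every flip to a loop or a flip, so `DimPres g` says that whether an `i`-flip moves coordinate `k`
depends only on `i`. If some `i`-flip moves `k`, all do, and since `g` is monotone along edges,
coordinate `k` is `x ↦ x i`; if none does, coordinate `k` is constant, the cube being connected.
-/

open Function

theorem cube_induction {ι : Type*} [Fintype ι] [DecidableEq ι] {P : (ι → Bool) → Prop}
    (bot : P fun _ => false) (step : ∀ x i, x i = false → P x → P (update x i true))
    (x : ι → Bool) : P x := by
  have key : ∀ s : Finset ι, P fun j => decide (j ∈ s) := by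
    intro s
    induction s using Finset.induction_on with
    | empty => simpa using bot
    | insert a s ha ih =>
      convert step _ a (by simpa using ha) ih using 1
      funext j
      by_cases hj : j = a <;> simp [hj]
  convert key (Finset.univ.filter fun j => x j = true)
  simp

def IsConstOrProj {ι : Type*} (f : (ι → Bool) → Bool) : Prop :=
  (∃ b, ∀ x, f x = b) ∨ ∃ i, ∀ x, f x = x i

section Lattice

variable {ι : Type*} {f : (ι → Bool) → Bool}

theorem IsConstOrProj.map_and (hf : IsConstOrProj f) (x y : ι → Bool) :
    f (fun i => x i && y i) = (f x && f y) := by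
  rcases hf with ⟨b, hb⟩ | ⟨i, hi⟩ <;> simp [*]

theorem IsConstOrProj.map_or (hf : IsConstOrProj f) (x y : ι → Bool) :
    f (fun i => x i || y i) = (f x || f y) := by
  rcases hf with ⟨b, hb⟩ | ⟨i, hi⟩ <;> simp [*]

theorem isConstOrProj_of_map_and_of_map_or [Fintype ι] [DecidableEq ι]
    (hand : ∀ x y, f (fun i => x i && y i) = (f x && f y))
    (hor : ∀ x y, f (fun i => x i || y i) = (f x || f y)) : IsConstOrProj f := by
  by_cases hconst : ∃ b, ∀ x, f x = b
  · exact Or.inl hconst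
  push Not at hconst
  obtain ⟨a, ha⟩ := hconst false
  obtain ⟨b, hb⟩ := hconst true
  rw [ne_eq, Bool.not_eq_false] at ha
  rw [ne_eq, Bool.not_eq_true] at hb
  have hbot : f (fun _ => false) = false := by simpa [hb] using hand (fun _ => false) b
  let e (i : ι) : ι → Bool := fun j => decide (j = i)
  obtain ⟨i, hi⟩ : ∃ i, f (e i) = true := by
    refine cube_induction (P := fun x => f x = true → ∃ i, f (e i) = true) (by simp [hbot])
      (fun x i _ ih hx => ?_) a ha
    have hxi : update x i true = fun j => x j || e i j := by
      funext j
      by_cases hj : j = i <;> simp [e, hj]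
    rw [hxi, hor, Bool.or_eq_true] at hx
    exact hx.elim ih (⟨i, ·⟩)
  refine Or.inr ⟨i, fun z => ?_⟩
  cases hz : z i
  · have hmeet : (fun j => z j && e i j) = fun _ => false := by
      funext j
      by_cases hj : j = i <;> simp [e, hj, hz]
    simpa [hmeet, hbot, hi] using (hand z (e i)).symm
  · have hjoin : (fun j => z j || e i j) = z := by
      funext j
      by_cases hj : j = i <;> simp [e, hj, hz]
    simpa [hjoin, hi] using hor z (e i)

end Lattice

theorem presMeet_and_presJoin_iff {m n : ℕ} {g : (Fin m → Bool) → Fin n → Bool} :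
    PresMeet g ∧ PresJoin g ↔ ∀ k, IsConstOrProj (g · k) := by
  constructor
  · rintro ⟨hmeet, hjoin⟩ k
    exact isConstOrProj_of_map_and_of_map_or (fun x y => congrFun (hmeet x y) k)
      (fun x y => congrFun (hjoin x y) k)
  · intro h
    exact ⟨fun x y => funext fun k => (h k).map_and x y,
      fun x y => funext fun k => (h k).map_or x y⟩

section Flips

variable {m n : ℕ} {x y : Fin m → Bool} {i : Fin m}

theorem Flips.symm (h : Flips x y i) : Flips y x i :=
  ⟨h.1.symm, fun j hj => (h.2 j hj).symm⟩

theorem flips_iff : Flips x y i ↔ ∀ k, x k = y k ↔ k ≠ i := by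
  refine ⟨fun h k => ⟨fun hk hki => h.1 (hki ▸ hk), h.2 k⟩, fun h => ⟨?_, fun j => (h j).2⟩⟩
  exact fun hi => (h i).1 hi rfl

theorem flips_update (h : x i = false) : Flips x (update x i true) i :=
  ⟨by simp [h], fun _ hj => (update_of_ne hj _ _).symm⟩

theorem cubeE_update (h : x i = false) : CubeE m x (update x i true) :=
  Or.inr ⟨i, h, by simp, (flips_update h).2⟩

theorem Flips.cubeE_or_cubeE (h : Flips x y i) : CubeE m x y ∨ CubeE m y x := by
  cases hx : x i
  · exact Or.inl (Or.inr ⟨i, hx, by simpa [hx] using h.1.symm, h.2⟩)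
  · exact Or.inr (Or.inr ⟨i, by simpa [hx] using h.1.symm, hx, h.symm.2⟩)

theorem CubeE.eq_or_flips (h : CubeE m x y) : x = y ∨ ∃ j, Flips x y j := by
  rcases h with h | ⟨j, hx, hy, hj⟩
  · exact Or.inl h
  · exact Or.inr ⟨j, by simp [hx, hy], hj⟩

theorem CubeE.le (h : CubeE m x y) : x ≤ y := by
  rcases h with rfl | ⟨j, hx, -, hj⟩
  · exact le_rfl
  · intro k
    by_cases hk : k = j
    · simp [hk, hx]
    · exact (hj k hk).le

variable {g : (Fin m → Bool) → Fin n → Bool}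

theorem IsGraphHom.eq_or_flips (hg : IsGraphHom (CubeE m) (CubeE n) g) (h : Flips x y i) :
    g x = g y ∨ ∃ j, Flips (g x) (g y) j := by
  rcases h.cubeE_or_cubeE with e | e
  · exact (hg _ _ e).eq_or_flips
  · rcases (hg _ _ e).eq_or_flips with h | ⟨j, hj⟩
    · exact Or.inl h.symm
    · exact Or.inr ⟨j, hj.symm⟩

theorem IsGraphHom.apply_le (hg : IsGraphHom (CubeE m) (CubeE n) g) (k : Fin n) :
    IsGraphHom (CubeE m) (· ≤ ·) (g · k) :=
  fun x y h => (hg x y h).le k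

end Flips

def FlipUniform {m : ℕ} (f : (Fin m → Bool) → Bool) : Prop :=
  ∀ x₁ y₁ x₂ y₂ (i : Fin m), Flips x₁ y₁ i → Flips x₂ y₂ i → (f x₁ = f y₁ ↔ f x₂ = f y₂)

section FlipUniform

variable {m n : ℕ} {f : (Fin m → Bool) → Bool}

theorem IsConstOrProj.flipUniform (hf : IsConstOrProj f) : FlipUniform f := by
  intro x₁ y₁ x₂ y₂ i h₁ h₂
  rcases hf with ⟨b, hb⟩ | ⟨i', hi'⟩
  · simp [hb]
  · simp only [hi']
    by_cases hi : i' = i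
    · subst hi
      exact iff_of_false h₁.1 h₂.1
    · exact iff_of_true (h₁.2 i' hi) (h₂.2 i' hi)

theorem FlipUniform.isConstOrProj (hf : FlipUniform f) (hmono : IsGraphHom (CubeE m) (· ≤ ·) f) :
    IsConstOrProj f := by
  by_cases hmove : ∃ x y i, Flips x y i ∧ f x ≠ f y
  · obtain ⟨x, y, i, hxy, hne⟩ := hmove
    refine Or.inr ⟨i, fun z => ?_⟩
    set lo := update z i false
    have hlo : lo i = false := by simp [lo]
    have hhi : update lo i true = update z i true := by simp [lo]
    have hmoves : f lo ≠ f (update z i true) := fun h =>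
      hne ((hf lo _ x y i (hhi ▸ flips_update hlo) hxy).1 h)
    have hle : f lo ≤ f (update z i true) := hhi ▸ hmono _ _ (cubeE_update hlo)
    obtain ⟨hflo, hfhi⟩ : f lo = false ∧ f (update z i true) = true := by
      revert hmoves hle
      cases f lo <;> cases f (update z i true) <;> decide
    rw [← update_eq_self i z]
    cases z i
    · simpa using hflo
    · simpa using hfhi
  · push Not at hmove
    refine Or.inl ⟨f fun _ => false, cube_induction rfl fun x i hx ih => ?_⟩
    rw [← ih]
    exact (hmove _ _ i (flips_update hx)).symm

variable {g : (Fin m → Bool) → Fin n → Bool}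

theorem IsGraphHom.dimPres_iff (hg : IsGraphHom (CubeE m) (CubeE n) g) :
    DimPres g ↔ ∀ k, FlipUniform (g · k) := by
  constructor
  · intro hd k x₁ y₁ x₂ y₂ i h₁ h₂
    rcases hd x₁ y₁ x₂ y₂ i h₁ h₂ with ⟨e₁, e₂⟩ | ⟨j, f₁, f₂⟩
    · exact iff_of_true (congrFun e₁ k) (congrFun e₂ k)
    · exact (flips_iff.1 f₁ k).trans (flips_iff.1 f₂ k).symm
  · intro hu x₁ y₁ x₂ y₂ i h₁ h₂
    rcases hg.eq_or_flips h₁ with e | ⟨j, hj⟩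
    · exact Or.inl ⟨e, funext fun k => (hu k x₁ y₁ x₂ y₂ i h₁ h₂).1 (congrFun e k)⟩
    · exact Or.inr ⟨j, hj, flips_iff.2 fun k =>
        (hu k x₁ y₁ x₂ y₂ i h₁ h₂).symm.trans (flips_iff.1 hj k)⟩

end FlipUniform

theorem stmt3 (m n : ℕ) (g : (Fin m → Bool) → (Fin n → Bool))
    (hg : IsGraphHom (CubeE m) (CubeE n) g) :
    (PresMeet g ∧ PresJoin g) ↔ DimPres g := by
  rw [presMeet_and_presJoin_iff, hg.dimPres_iff]
  exact forall_congr' fun k =>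
    ⟨IsConstOrProj.flipUniform, fun hu => hu.isConstOrProj (hg.apply_le k)⟩
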